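/- Suppose the data satisfies the Koopman invariance relation φ_{n+1} = e^{(α* + iβ*)Δ_n} φ_n for all n ∈ {1, …, N}, where α*, β* ∈ ℝ. Then for all α, β ∈ ℝ, the derivative of the loss in the frequency direction is ∂L/∂β (α, β, a) = (2/N) Σ_{n=1}^N Δ_n e^{(α + α*)Δ_n} |φ_n|² sin( (β − β*) Δ_n ). -/

import Mathlib

open Complex Finset Matrix

/-- `φ n = a† G(x n)`, the dictionary observable evaluated along the data. -/
noncomputable def koopPhi {N M D : ℕ} (x : Fin (N + 1) → (Fin D → ℝ))
    (G : (Fin D → ℝ) → Fin M → ℂ) (a : Fin M → ℂ) (n : Fin (N + 1)) : ℂ :=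
  star a ⬝ᵥ G (x n)

/-- The loss `L(α, β, a) = (1/N) Σ_{n=1}^N |φ_{n+1} − e^{(α+iβ)Δ_n} φ_n|²`. -/
noncomputable def koopLoss {N M D : ℕ} (x : Fin (N + 1) → (Fin D → ℝ))
    (Δ : Fin N → ℝ) (G : (Fin D → ℝ) → Fin M → ℂ) (a : Fin M → ℂ)
    (α β : ℝ) : ℝ :=
  (1 / N : ℝ) * ∑ n : Fin N,
    ‖koopPhi x G a n.succ -
      Complex.exp ((α + β * Complex.I) * (Δ n : ℂ)) * koopPhi x G a n.castSucc‖ ^ 2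

/-! Under the invariance relation each residual is `(e^{(α*+iβ*)Δ} − e^{(α+iβ)Δ}) φ`, whose squared
modulus is `|φ|² (e^{2α*Δ} + e^{2αΔ} − 2 e^{(α+α*)Δ} cos((β − β*)Δ))` by the law of cosines;
only the cosine depends on `β`, and differentiating it gives the sine. -/

theorem norm_exp_mul_sub_exp_mul_sq (u v φ : ℂ) :
    ‖exp u * φ - exp v * φ‖ ^ 2 = ‖φ‖ ^ 2 *
      (Real.exp u.re ^ 2 + Real.exp v.re ^ 2 -
        2 * Real.exp (u.re + v.re) * Real.cos (v.im - u.im)) := by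
  have hcross : (exp u * (starRingEnd ℂ) (exp v)).re =
      Real.exp (u.re + v.re) * Real.cos (v.im - u.im) := by
    rw [← exp_conj, ← exp_add, exp_re, ← Real.cos_neg]
    simp only [add_re, add_im, conj_re, conj_im]
    ring_nf
  rw [← sub_mul, norm_mul, mul_pow, Complex.sq_norm (exp u - exp v), normSq_sub,
    normSq_eq_norm_sq, normSq_eq_norm_sq, norm_exp, norm_exp, hcross]
  ring

theorem hasDerivAt_norm_exp_mul_sub_exp_mul_sq (α αstar βstar d β : ℝ) (φ : ℂ) :
    HasDerivAt (fun s : ℝ =>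
        ‖exp ((αstar + βstar * I) * d) * φ - exp ((α + s * I) * d) * φ‖ ^ 2)
      (2 * (d * Real.exp ((α + αstar) * d) * ‖φ‖ ^ 2 * Real.sin ((β - βstar) * d))) β := by
  have hcos : HasDerivAt (fun s : ℝ => Real.cos ((s - βstar) * d))
      (-Real.sin ((β - βstar) * d) * d) β :=
    (Real.hasDerivAt_cos _).comp β
      (by simpa using ((hasDerivAt_id β).sub_const βstar).mul_const d)
  have hnorm : (fun s : ℝ =>
      ‖exp ((αstar + βstar * I) * d) * φ - exp ((α + s * I) * d) * φ‖ ^ 2) = fun s =>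
      ‖φ‖ ^ 2 * (Real.exp (αstar * d) ^ 2 + Real.exp (α * d) ^ 2) -
        2 * ‖φ‖ ^ 2 * Real.exp ((α + αstar) * d) * Real.cos ((s - βstar) * d) := by
    funext s
    rw [norm_exp_mul_sub_exp_mul_sq]
    simp only [mul_re, mul_im, add_re, add_im, ofReal_re, ofReal_im, I_re, I_im]
    ring_nf
  rw [hnorm]
  exact ((hcos.const_mul _).const_sub _).congr_deriv (by ring)

theorem loss_deriv_beta_invariant_general {N M D : ℕ}
    (x : Fin (N + 1) → (Fin D → ℝ))
    (Δ : Fin N → ℝ)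
    (G : (Fin D → ℝ) → Fin M → ℂ) (a : Fin M → ℂ)
    (αstar βstar : ℝ)
    (hinv : ∀ n : Fin N, koopPhi x G a n.succ =
      Complex.exp ((αstar + βstar * Complex.I) * (Δ n : ℂ)) * koopPhi x G a n.castSucc) :
    ∀ α β : ℝ,
      HasDerivAt (fun s : ℝ => koopLoss x Δ G a α s)
        ((2 / N : ℝ) * ∑ n : Fin N,
          Δ n * Real.exp ((α + αstar) * Δ n) * ‖koopPhi x G a n.castSucc‖ ^ 2 *
            Real.sin ((β - βstar) * Δ n)) β := by
  intro α β
  have hsum := (HasDerivAt.fun_sum fun n (_ : n ∈ univ) =>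
    hasDerivAt_norm_exp_mul_sub_exp_mul_sq α αstar βstar (Δ n) β
      (koopPhi x G a n.castSucc)).const_mul (1 / N : ℝ)
  simp only [koopLoss, hinv]
  exact hsum.congr_deriv (by rw [← mul_sum]; ring)

/-- Under the Koopman invariance relation `φ_{n+1} = e^{(α* + iβ*)Δ_n} φ_n`, the
derivative of the loss in the frequency direction is
`(2/N) Σ Δ_n e^{(α+α*)Δ_n} |φ_n|² sin((β − β*)Δ_n)`. -/
theorem loss_deriv_beta_invariant {N M D : ℕ}
    (x : Fin (N + 1) → (Fin D → ℝ)) (t : Fin (N + 1) → ℝ)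
    (Δ : Fin N → ℝ) (hΔ : ∀ n : Fin N, Δ n = t n.succ - t n.castSucc)
    (hΔpos : ∀ n : Fin N, 0 < Δ n)
    (G : (Fin D → ℝ) → Fin M → ℂ) (a : Fin M → ℂ)
    (αstar βstar : ℝ)
    (hinv : ∀ n : Fin N, koopPhi x G a n.succ =
      Complex.exp ((αstar + βstar * Complex.I) * (Δ n : ℂ)) * koopPhi x G a n.castSucc) :
    ∀ α β : ℝ,
      HasDerivAt (fun s : ℝ => koopLoss x Δ G a α s)
        ((2 / N : ℝ) * ∑ n : Fin N,
          Δ n * Real.exp ((α + αstar) * Δ n) * ‖koopPhi x G a n.castSucc‖ ^ 2 *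
            Real.sin ((β - βstar) * Δ n)) β :=
  loss_deriv_beta_invariant_general x Δ G a αstar βstar hinv
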